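/- The formal power series M with constant term 1 satisfying M = (1 - xM)/(1 - 2xM), equivalently M - 1 = xM(2M-1), has coefficients [x^n]M = (1/n) * sum_{i=0}^{n-1} binomial(n, i) * binomial(n, i+1) * 2^i for n >= 1 (the little Schroeder numbers). -/

import Mathlib

/-!
The functional equation is quadratic in `M`; differentiating it and eliminating `M²` gives the
first-order linear equation `(1 - 6X + X²) X M' = (3X - 1) M + 1 - X`, that is, the coefficient
recurrence `(n + 3) aₙ₊₂ = (6n + 9) aₙ₊₁ - n aₙ`. The binomial sums satisfy the same recurrence
by creative telescoping, with the certificate `schroederCert` found by Zeilberger's algorithm.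
Since the recurrence at `n = 0` does not involve `a₀`, both sequences are determined by their
common first term `a₁ = 1`.
-/

open PowerSeries Finset

namespace Nat

theorem cast_add_one_mul_choose_succ {R : Type*} [CommRing R] (m k : ℕ) :
    ((k : R) + 1) * m.choose (k + 1) = ((m : R) - k) * m.choose k := by
  rcases le_or_gt k m with hkm | hmk
  · have h := congrArg (Nat.cast : ℕ → R) (choose_succ_right_eq m k)
    push_cast [Nat.cast_sub hkm] at h
    linear_combination h
  · simp [choose_eq_zero_of_lt hmk, choose_eq_zero_of_lt (lt_succ_of_lt hmk)]

theorem cast_add_one_mul_choose {R : Type*} [CommRing R] (m k : ℕ) :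
    ((m : R) + 1) * m.choose k = ((m : R) + 1 - k) * (m + 1).choose k := by
  rcases le_or_gt k (m + 1) with hkm | hmk
  · have h := congrArg (Nat.cast : ℕ → R) (choose_mul_succ_eq m k)
    push_cast [Nat.cast_sub hkm] at h
    linear_combination h
  · simp [choose_eq_zero_of_lt hmk, choose_eq_zero_of_lt (lt_of_succ_lt hmk)]

theorem cast_add_one_mul_choose_add_one {R : Type*} [CommRing R] (m k : ℕ) :
    ((m : R) + 1) * m.choose k = ((k : R) + 1) * (m + 1).choose (k + 1) := by
  have h := congrArg (Nat.cast : ℕ → R) (add_one_mul_choose_eq m k)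
  push_cast at h
  linear_combination h

end Nat

def schroederTerm (n i : ℕ) : ℚ := n.choose i * n.choose (i + 1) * 2 ^ i

def schroederCert (n : ℕ) : ℕ → ℚ
  | 0 => 0
  | i + 1 =>
    2 ^ (i + 1) * (n + 2).choose (i + 1) * n.choose i * (i * (i + 1) - (n + 1) * (2 * n + 3))

theorem schroederTerm_telescope (n i : ℕ) :
    (n + 1) * (n + 3) * schroederTerm (n + 2) i
        - 3 * (n + 2) * (2 * n + 3) * schroederTerm (n + 1) i
        + (n + 2) * (n + 1) * schroederTerm n i
      = schroederCert n (i + 1) - schroederCert n i := by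
  cases i with
  | zero =>
    simp only [schroederTerm, schroederCert, zero_add, Nat.choose_zero_right, Nat.choose_one_right]
    push_cast
    ring
  | succ j =>
    have hZ := Nat.cast_add_one_mul_choose_succ (R := ℚ) (n + 2) (j + 1)
    have ha₁ := Nat.cast_add_one_mul_choose (R := ℚ) (n + 1) (j + 1)
    have ha₂ := Nat.cast_add_one_mul_choose (R := ℚ) (n + 1) (j + 2)
    have hb₀ := Nat.cast_add_one_mul_choose_add_one (R := ℚ) n j
    have hb₁ := Nat.cast_add_one_mul_choose (R := ℚ) n (j + 1)
    have hb₂ := Nat.cast_add_one_mul_choose (R := ℚ) n (j + 2)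
    simp only [schroederTerm, schroederCert]
    push_cast at *
    -- Over `ℚ` the shift identities hold without truncation, so every binomial coefficient is a
    -- multiple of `Y = C(n + 2, j + 1)` with a denominator that never vanishes.
    generalize ((n + 2).choose (j + 1) : ℚ) = Y at *
    generalize ((n + 2).choose (j + 2) : ℚ) = Z at *
    generalize ((n + 1).choose (j + 1) : ℚ) = a₁ at *
    generalize ((n + 1).choose (j + 2) : ℚ) = a₂ at *
    generalize (n.choose j : ℚ) = b₀ at *
    generalize (n.choose (j + 1) : ℚ) = b₁ at *
    generalize (n.choose (j + 2) : ℚ) = b₂ at *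
    obtain rfl : b₀ = (j + 1) * a₁ / (n + 1) := by
      rw [eq_div_iff (by positivity)]; linear_combination hb₀
    obtain rfl : b₁ = (n - j) * a₁ / (n + 1) := by
      rw [eq_div_iff (by positivity)]; linear_combination hb₁
    obtain rfl : b₂ = (n - j - 1) * a₂ / (n + 1) := by
      rw [eq_div_iff (by positivity)]; linear_combination hb₂
    obtain rfl : a₁ = (n + 1 - j) * Y / (n + 2) := by
      rw [eq_div_iff (by positivity)]; linear_combination ha₁
    obtain rfl : a₂ = (n - j) * Z / (n + 2) := by
      rw [eq_div_iff (by positivity)]; linear_combination ha₂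
    obtain rfl : Z = (n + 1 - j) * Y / (j + 2) := by
      rw [eq_div_iff (by positivity)]; linear_combination hZ
    field_simp
    ring

theorem schroederTerm_eq_zero_of_le {n i : ℕ} (h : n ≤ i) : schroederTerm n i = 0 := by
  simp [schroederTerm, Nat.choose_eq_zero_of_lt (Nat.lt_succ_of_le h)]

theorem sum_range_schroederTerm_of_le {n m : ℕ} (h : n ≤ m) :
    ∑ i ∈ range m, schroederTerm n i = ∑ i ∈ range n, schroederTerm n i :=
  (sum_subset (range_subset_range.2 h) fun _ _ hi ↦
    schroederTerm_eq_zero_of_le (not_lt.1 (mem_range.not.1 hi))).symm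

theorem sum_schroederTerm_recurrence (n : ℕ) :
    (n + 1) * (n + 3) * ∑ i ∈ range (n + 2), schroederTerm (n + 2) i
      = 3 * (n + 2) * (2 * n + 3) * ∑ i ∈ range (n + 1), schroederTerm (n + 1) i
        - (n + 2) * (n + 1) * ∑ i ∈ range n, schroederTerm n i := by
  have htel : ∑ i ∈ range (n + 2), (schroederCert n (i + 1) - schroederCert n i) = 0 := by
    rw [sum_range_sub]
    simp [schroederCert]
  simp only [← schroederTerm_telescope, sum_add_distrib, sum_sub_distrib, ← mul_sum,
    sum_range_schroederTerm_of_le (Nat.le_succ (n + 1)),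
    sum_range_schroederTerm_of_le (Nat.le_add_right n 2)] at htel
  linear_combination htel

def littleSchroeder (n : ℕ) : ℚ := 1 / n * ∑ i ∈ range n, schroederTerm n i

theorem littleSchroeder_one : littleSchroeder 1 = 1 := by
  simp [littleSchroeder, schroederTerm]

theorem cast_mul_littleSchroeder (n : ℕ) :
    n * littleSchroeder n = ∑ i ∈ range n, schroederTerm n i := by
  rcases eq_or_ne n 0 with rfl | hn
  · simp
  · rw [littleSchroeder, ← mul_assoc, mul_one_div_cancel (by exact_mod_cast hn), one_mul]

def SchroederRecurrence {K : Type*} [Ring K] (a : ℕ → K) : Prop :=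
  ∀ n : ℕ, ((n : K) + 3) * a (n + 2) = (6 * n + 9) * a (n + 1) - n * a n

theorem SchroederRecurrence.eq_of_apply_one_eq {K : Type*} [Field K] [CharZero K] {a b : ℕ → K}
    (ha : SchroederRecurrence a) (hb : SchroederRecurrence b) (h1 : a 1 = b 1) {n : ℕ}
    (hn : 1 ≤ n) : a n = b n := by
  have key : ∀ m : ℕ, m * a m = m * b m ∧ a (m + 1) = b (m + 1) := by
    intro m
    induction m with
    | zero => simpa using h1
    | succ m ih =>
      refine ⟨by rw [ih.2], mul_left_cancel₀ (by norm_cast : ((m : K) + 3) ≠ 0) ?_⟩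
      rw [ha m, hb m, ih.1, ih.2]
  obtain ⟨m, rfl⟩ := Nat.exists_eq_add_of_le' hn
  exact (key m).2

theorem schroederRecurrence_littleSchroeder : SchroederRecurrence littleSchroeder := by
  intro n
  have h := sum_schroederTerm_recurrence n
  simp only [← cast_mul_littleSchroeder] at h
  push_cast at h
  apply mul_left_cancel₀ (by positivity : ((n : ℚ) + 1) * (n + 2) ≠ 0)
  linear_combination h

namespace PowerSeries

variable {R : Type*} [CommRing R]

theorem coeff_X_mul_derivative (f : R⟦X⟧) (n : ℕ) :
    coeff n (X * d⁄dX R f) = n * coeff n f := by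
  cases n with
  | zero => simp
  | succ n => rw [coeff_succ_X_mul, coeff_derivative]; push_cast; ring

variable {M : R⟦X⟧} (h : M - 1 = X * M * (2 * M - 1))
include h

theorem schroeder_ode :
    (1 - 6 * X + X ^ 2) * (X * d⁄dX R M) = (3 * X - 1) * M + 1 - X := by
  have hQ : 2 * X * M ^ 2 - (1 + X) * M + 1 = 0 := by linear_combination -h
  have hD : 4 * X * M * d⁄dX R M + 2 * M ^ 2 - (1 + X) * d⁄dX R M - M = 0 := by
    have h2 := congrArg (d⁄dX R) hQ
    have h3 : d⁄dX R (2 : R⟦X⟧) = 0 := by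
      rw [show (2 : R⟦X⟧) = 1 + 1 by norm_num]; simp
    simp only [map_sub, map_add, Derivation.leibniz, Derivation.leibniz_pow, derivative_X,
      smul_eq_mul, Derivation.map_one_eq_zero, h3, nsmul_eq_mul, map_zero] at h2
    linear_combination h2
  linear_combination
    (X * (4 * X * M - 1 - X)) * hD + (X - 1 - 4 * X * M - 8 * X ^ 2 * d⁄dX R M) * hQ

theorem schroederRecurrence_coeff : SchroederRecurrence fun n ↦ coeff n M := by
  intro n
  have hc := congrArg (coeff (n + 2)) (schroeder_ode h)
  set θ := X * d⁄dX R M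
  have hθ : ∀ k, coeff k θ = k * coeff k M := coeff_X_mul_derivative M
  have h6 : (6 : R⟦X⟧) = C 6 := (map_ofNat C 6).symm
  have h3 : (3 : R⟦X⟧) = C 3 := (map_ofNat C 3).symm
  simp only [sub_mul, add_mul, map_sub, map_add, one_mul, mul_assoc, h6, h3, coeff_C_mul,
    coeff_succ_X_mul, coeff_X_pow_mul', coeff_one, coeff_X, hθ, Nat.cast_add, Nat.cast_ofNat,
    Nat.cast_one, le_add_iff_nonneg_left, zero_le, ↓reduceIte, add_tsub_cancel_right,
    Nat.add_eq_zero_iff, OfNat.ofNat_ne_zero, and_false, add_zero, Nat.reduceEqDiff, sub_zero] at hc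
  linear_combination hc

theorem schroeder_coeff_one (h0 : constantCoeff M = 1) : coeff 1 M = 1 := by
  have hc := congrArg (coeff 1) h
  simp only [map_sub, coeff_one, one_ne_zero, ↓reduceIte, sub_zero, mul_assoc, coeff_succ_X_mul,
    coeff_zero_eq_constantCoeff, map_mul, h0, map_ofNat, mul_one, constantCoeff_one, one_mul] at hc
  linear_combination hc

end PowerSeries

/-- the power series `M` with constant term 1 satisfying
`M - 1 = x M (2M - 1)` has coefficients
`[xⁿ]M = (1/n) ∑_{i=0}^{n-1} C(n,i) C(n,i+1) 2^i` for `n ≥ 1`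
(the little Schröder numbers). -/
theorem little_schroeder_series_coeff (M : PowerSeries ℚ)
    (h0 : PowerSeries.constantCoeff M = 1)
    (h : M - 1 = PowerSeries.X * M * (2 * M - 1)) :
    ∀ n : ℕ, 1 ≤ n →
      PowerSeries.coeff n M =
        (1 / (n : ℚ)) * ∑ i ∈ Finset.range n,
          (n.choose i : ℚ) * (n.choose (i + 1) : ℚ) * 2 ^ i := by
  intro n hn
  exact (schroederRecurrence_coeff h).eq_of_apply_one_eq schroederRecurrence_littleSchroeder
    ((schroeder_coeff_one h h0).trans littleSchroeder_one.symm) hn
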